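/- Define A_n(x) for m ≥ 2 as the rational functions satisfying: A_{-1}(x) = 1 and the recurrence (writing n+1 = m·n₁ + n₀ with 0 < n₀ ≤ m): A_n(x) = A_{n+1}(x) if 2n₀ = m-1; A_n(x) = A_{n+1}(x)(1 - (1-δ_{m,2})x) if n₀ = m-1 or 2n₀ = m-2; A_n(x) = A_{n+1}(x) - (1-δ_{m,2}) x² A_{n+2}(x) if 2n₀ = m; A_n(x) = (1-x) A_{n+1}(x) - (1-δ_{m,2}) x² A_{n+2}(x) otherwise. Define a_n(x) by a_0 = a_1 = 1, a_n = a_{n-1} - x a_{n-2} (n odd), a_n = (1+x) a_{n-1} - x a_{n-2} (n even). Then for s ≥ 0 and 0 ≤ r ≤ m-1: A_{ms+r}(x) = a_{2m-2r-1}(x) / (a_m(x) a_{m+1}(x))^{s+1} if ⌊m/2⌋ ≤ r ≤ m-1, and A_{ms+r}(x) = a_m(x) a_{m-2r-1}(x) / (a_m(x) a_{m+1}(x))^{s+1} if 0 ≤ r ≤ ⌊m/2⌋ - 1. -/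

import Mathlib

/-- The polynomials `a_n(x)`: `a₀ = a₁ = 1`, and for `n ≥ 2`,
`a_n = a_{n-1} - x a_{n-2}` if `n` is odd, `a_n = (1+x) a_{n-1} - x a_{n-2}` if `n` is even,
viewed inside the field of rational functions `ℚ(x)` with `x = RatFunc.X`. -/
noncomputable def aFn : ℕ → RatFunc ℚ
  | 0 => 1
  | 1 => 1
  | (n + 2) =>
    if (n + 2) % 2 = 1 then aFn (n + 1) - RatFunc.X * aFn n
    else (1 + RatFunc.X) * aFn (n + 1) - RatFunc.X * aFn n

/-!
Cut `{n ≥ -1}` into blocks `b - 1, b, …, b + m - 1` with `m ∣ b`. Read downwards from the top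
value `u = A (b + m - 1)`, the recurrence inside a block is, away from a few special residues, the
two-step recurrence `a_{n+4} = (1 - x) a_{n+2} - x² a_n` satisfied by the odd and by the even `a`'s.
So the upper half of the block is `a_{2i+1} u`, the special residues in the middle produce `a_m u`,
and the lower half continues as `a_m a_{m-1-2j} u` down to `A (b - 1) = a_m a_{m+1} u`. As every
`a_n` is a polynomial with constant term `1`, `a_m a_{m+1} ≠ 0`; hence the top of each block is the
top of the previous one divided by `a_m a_{m+1}`, starting from `A (-1) = 1`.
-/

open RatFunc (X)

lemma aFn_add_two_of_even {n : ℕ} (hn : Even n) :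
    aFn (n + 2) = (1 + X) * aFn (n + 1) - X * aFn n := by
  rw [aFn, if_neg (by rcases hn with ⟨k, rfl⟩; omega)]

lemma aFn_add_two_of_odd {n : ℕ} (hn : Odd n) : aFn (n + 2) = aFn (n + 1) - X * aFn n := by
  rw [aFn, if_pos (by rcases hn with ⟨k, rfl⟩; omega)]

lemma aFn_add_four (n : ℕ) : aFn (n + 4) = (1 - X) * aFn (n + 2) - X ^ 2 * aFn n := by
  rcases Nat.even_or_odd n with hn | hn
  · have e₁ : aFn (n + 4) = (1 + X) * aFn (n + 3) - X * aFn (n + 2) :=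
      aFn_add_two_of_even (n := n + 2) (by simpa [parity_simps] using hn)
    have e₂ : aFn (n + 3) = aFn (n + 2) - X * aFn (n + 1) :=
      aFn_add_two_of_odd (n := n + 1) (by simpa [parity_simps] using hn)
    linear_combination e₁ + (1 + X) * e₂ + X * aFn_add_two_of_even hn
  · have e₁ : aFn (n + 4) = aFn (n + 3) - X * aFn (n + 2) :=
      aFn_add_two_of_odd (n := n + 2) (by simpa [parity_simps] using hn)
    have e₂ : aFn (n + 3) = (1 + X) * aFn (n + 2) - X * aFn (n + 1) :=
      aFn_add_two_of_even (n := n + 1) (by simpa [parity_simps] using hn)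
    linear_combination e₁ + e₂ + X * aFn_add_two_of_odd hn

lemma aFn_two_mul_add_four (k : ℕ) :
    aFn (2 * k + 4) = aFn (2 * k + 3) - X ^ 2 * aFn (2 * k + 1) := by
  have e₁ : aFn (2 * k + 4) = (1 + X) * aFn (2 * k + 3) - X * aFn (2 * k + 2) :=
    aFn_add_two_of_even (n := 2 * k + 2) ⟨k + 1, by ring⟩
  have e₂ : aFn (2 * k + 3) = aFn (2 * k + 2) - X * aFn (2 * k + 1) :=
    aFn_add_two_of_odd (n := 2 * k + 1) ⟨k, rfl⟩
  linear_combination e₁ + X * e₂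

lemma aFn_one : aFn 1 = 1 := by simp [aFn]

lemma aFn_two : aFn 2 = 1 := by simp [aFn]

lemma aFn_three : aFn 3 = 1 - X := by norm_num [aFn]

lemma aFn_exists_polynomial_eval_zero_eq_one (n : ℕ) :
    ∃ p : Polynomial ℚ, p.eval 0 = 1 ∧ algebraMap (Polynomial ℚ) (RatFunc ℚ) p = aFn n := by
  induction n using Nat.twoStepInduction with
  | zero => exact ⟨1, by simp, by simp [aFn]⟩
  | one => exact ⟨1, by simp, by simp [aFn]⟩
  | more n ih₀ ih₁ =>
    obtain ⟨p, hp0, hp⟩ := ih₀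
    obtain ⟨q, hq0, hq⟩ := ih₁
    rcases Nat.even_or_odd n with hn | hn
    · refine ⟨(1 + Polynomial.X) * q - Polynomial.X * p, by simp [hp0, hq0], ?_⟩
      simp [aFn_add_two_of_even hn, hp, hq, RatFunc.algebraMap_X]
    · refine ⟨q - Polynomial.X * p, by simp [hp0, hq0], ?_⟩
      simp [aFn_add_two_of_odd hn, hp, hq, RatFunc.algebraMap_X]

lemma aFn_ne_zero (n : ℕ) : aFn n ≠ 0 := by
  obtain ⟨p, hp0, hp⟩ := aFn_exists_polynomial_eval_zero_eq_one n
  rw [← hp]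
  refine RatFunc.algebraMap_ne_zero fun h => ?_
  simp [h] at hp0

lemma eq_aFn_mul_of_two_step_rec {A : ℤ → RatFunc ℚ} {n₀ : ℤ} {c : RatFunc ℚ} {k N : ℕ}
    (h₀ : A n₀ = aFn k * c) (h₁ : 1 ≤ N → A (n₀ - 1) = aFn (k + 2) * c)
    (hstep : ∀ n, n₀ - N ≤ n → n + 2 ≤ n₀ →
      A n = (1 - X) * A (n + 1) - X ^ 2 * A (n + 2)) :
    ∀ i ≤ N, A (n₀ - i) = aFn (k + 2 * i) * c := by
  intro i
  induction i using Nat.twoStepInduction with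
  | zero => simpa using h₀
  | one => simpa using h₁
  | more i ih₀ ih₁ =>
    intro hi
    rw [hstep _ (by omega) (by omega), show n₀ - (i + 2 : ℕ) + 1 = n₀ - (i + 1 : ℕ) by omega,
      show n₀ - (i + 2 : ℕ) + 2 = n₀ - i by omega, ih₁ (by omega), ih₀ (by omega),
      show k + 2 * (i + 1) = k + 2 * i + 2 by ring, show k + 2 * (i + 2) = k + 2 * i + 4 by ring,
      aFn_add_four]
    ring

lemma Int.emod_eq_sub_of_dvd {m b n : ℤ} (hb : m ∣ b) (h₀ : b ≤ n) (h₁ : n < b + m) :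
    n % m = n - b := by
  obtain ⟨k, rfl⟩ := hb
  rw [← Int.emod_eq_of_lt (a := n - m * k) (b := m) (by omega) (by omega),
    Int.sub_mul_emod_self_left]

/-- `n % m + 1` is the paper's `n₀`. -/
def GenSeriesRec (m : ℕ) (A : ℤ → RatFunc ℚ) : Prop :=
  ∀ n : ℤ, -1 ≤ n →
    A n =
      if 2 * (n % (m : ℤ) + 1) = (m : ℤ) - 1 then A (n + 1)
      else if (n % (m : ℤ) + 1) = (m : ℤ) - 1 ∨ 2 * (n % (m : ℤ) + 1) = (m : ℤ) - 2 then
        A (n + 1) * (1 - (if m = 2 then 0 else 1) * RatFunc.X)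
      else if 2 * (n % (m : ℤ) + 1) = (m : ℤ) then
        A (n + 1) - (if m = 2 then 0 else 1) * RatFunc.X ^ 2 * A (n + 2)
      else
        (1 - RatFunc.X) * A (n + 1) - (if m = 2 then 0 else 1) * RatFunc.X ^ 2 * A (n + 2)

namespace GenSeriesRec

variable {m : ℕ} {A : ℤ → RatFunc ℚ} {n r b : ℤ} {t : ℕ}

lemma eq_of_two_mul_add_three (hA : GenSeriesRec m A) (hn : -1 ≤ n) (hr : n % m = r)
    (h : 2 * r + 3 = m) : A n = A (n + 1) := by
  rw [hA n hn, hr, if_pos (by omega)]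

lemma eq_of_add_two (hA : GenSeriesRec m A) (hm : 3 ≤ m) (hn : -1 ≤ n) (hr : n % m = r)
    (h : r + 2 = m ∨ 2 * r + 4 = m) : A n = (1 - X) * A (n + 1) := by
  rw [hA n hn, hr, if_neg (by omega), if_pos (by omega), if_neg (by omega)]
  ring

lemma eq_of_two_mul_add_two (hA : GenSeriesRec m A) (hm : 3 ≤ m) (hn : -1 ≤ n)
    (hr : n % m = r) (h : 2 * r + 2 = m) : A n = A (n + 1) - X ^ 2 * A (n + 2) := by
  rw [hA n hn, hr, if_neg (by omega), if_neg (by omega), if_pos (by omega), if_neg (by omega)]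
  ring

lemma eq_of_generic (hA : GenSeriesRec m A) (hm : 3 ≤ m) (hn : -1 ≤ n) (hr : n % m = r)
    (h : 2 * r + 4 < m ∨ m < 2 * r + 2 ∧ r + 2 ≠ m) :
    A n = (1 - X) * A (n + 1) - X ^ 2 * A (n + 2) := by
  rw [hA n hn, hr, if_neg (by omega), if_neg (by omega), if_neg (by omega), if_neg (by omega)]
  ring

lemma eq_of_two_of_emod_eq_zero (hA : GenSeriesRec m A) (hm : m = 2) (hn : -1 ≤ n)
    (hr : n % m = 0) : A n = A (n + 1) := by
  subst hm
  rw [hA n hn, hr]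
  norm_num

lemma eq_of_two_of_emod_eq_one (hA : GenSeriesRec m A) (hm : m = 2) (hn : -1 ≤ n)
    (hr : n % m = 1) : A n = (1 - X) * A (n + 1) := by
  subst hm
  rw [hA n hn, hr]
  norm_num

lemma upper_half (hA : GenSeriesRec m A) (hb : 0 ≤ b) (hbm : (m : ℤ) ∣ b)
    (ht : t = (m - 1) / 2) :
    ∀ i ≤ t, A (b + m - 1 - i) = aFn (2 * i + 1) * A (b + m - 1) := by
  intro i hi
  rw [add_comm (2 * i)]
  refine eq_aFn_mul_of_two_step_rec (by rw [aFn_one, one_mul]) (fun h ↦ ?_) (fun n h₀ h₁ ↦ ?_) i hi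
  · rw [hA.eq_of_add_two (by omega) (by omega) (Int.emod_eq_sub_of_dvd hbm (by omega) (by omega))
      (by omega), sub_add_cancel, aFn_three]
  · exact hA.eq_of_generic (by omega) (by omega)
      (Int.emod_eq_sub_of_dvd hbm (by omega) (by omega)) (by omega)

lemma middle_eq (hA : GenSeriesRec m A) (hm : 2 ≤ m) (hb : 0 ≤ b) (hbm : (m : ℤ) ∣ b)
    (ht : t = (m - 1) / 2) : A (b + t) = aFn m * A (b + m - 1) := by
  have hup := hA.upper_half hb hbm ht
  rcases Nat.even_or_odd' m with ⟨k, hk | hk⟩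
  · obtain rfl | hm₄ : m = 2 ∨ 4 ≤ m := by omega
    · rw [hA.eq_of_two_of_emod_eq_zero rfl (by omega)
        ((Int.emod_eq_sub_of_dvd hbm (by omega) (by omega)).trans (by omega)), aFn_two, one_mul]
      congr 1
      omega
    · rw [hA.eq_of_two_mul_add_two (by omega) (by omega)
        (Int.emod_eq_sub_of_dvd hbm (by omega) (by omega)) (by omega),
        show b + t + 1 = b + m - 1 - ↑t by omega, show b + t + 2 = b + m - 1 - ↑(t - 1) by omega,
        hup t le_rfl, hup (t - 1) (by omega), show m = 2 * (t - 1) + 4 by omega,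
        aFn_two_mul_add_four, show 2 * t + 1 = 2 * (t - 1) + 3 by omega]
      ring
  · have := hup t le_rfl
    rwa [show b + m - 1 - t = b + t by omega, show 2 * t + 1 = m by omega] at this

lemma lower_half (hA : GenSeriesRec m A) (hm : 2 ≤ m) (hb : 0 ≤ b) (hbm : (m : ℤ) ∣ b)
    (ht : t = (m - 1) / 2) :
    ∀ i ≤ t + 1, A (b + t - i) = aFn (m - 2 * t - 1 + 2 * i) * (aFn m * A (b + m - 1)) := by
  have hmid := hA.middle_eq hm hb hbm ht
  have hbm' : (m : ℤ) ∣ b - m := dvd_sub hbm dvd_rfl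
  refine eq_aFn_mul_of_two_step_rec ?_ (fun _ ↦ ?_) (fun n h₀ h₁ ↦ ?_)
  · obtain h | h : m - 2 * t - 1 = 0 ∨ m - 2 * t - 1 = 1 := by omega
    all_goals rw [hmid, h]; simp [aFn]
  · rw [← hmid]
    rcases Nat.even_or_odd' m with ⟨k, hk | hk⟩
    · obtain hm₂ | hm₄ : m = 2 ∨ 4 ≤ m := by omega
      · rw [hA.eq_of_two_of_emod_eq_one hm₂ (by omega)
          ((Int.emod_eq_sub_of_dvd hbm' (by omega) (by omega)).trans (by omega)), sub_add_cancel,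
          show m - 2 * t - 1 + 2 = 3 by omega, aFn_three]
      · rw [hA.eq_of_add_two (by omega) (by omega) (Int.emod_eq_sub_of_dvd hbm (by omega) (by omega))
          (by omega), sub_add_cancel, show m - 2 * t - 1 + 2 = 3 by omega, aFn_three]
    · rw [hA.eq_of_two_mul_add_three (by omega) (Int.emod_eq_sub_of_dvd hbm (by omega) (by omega))
        (by omega), sub_add_cancel, show m - 2 * t - 1 + 2 = 2 by omega, aFn_two, one_mul]
  · have hr : n % m = n - b ∨ n % m = n - (b - m) := by
      obtain hn | hn : b ≤ n ∨ n = b - 1 := by omega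
      exacts [.inl (Int.emod_eq_sub_of_dvd hbm hn (by omega)),
        .inr (Int.emod_eq_sub_of_dvd hbm' (by omega) (by omega))]
    rcases hr with hr | hr <;>
      exact hA.eq_of_generic (by omega) (by omega) hr (by omega)

lemma eq_mul_top (hA : GenSeriesRec m A) (hm : 2 ≤ m) (hb : 0 ≤ b) (hbm : (m : ℤ) ∣ b)
    (r : ℕ) (hr : r ≤ m - 1) :
    A (b + r) = (if m / 2 ≤ r then aFn (2 * m - 2 * r - 1) else aFn m * aFn (m - 2 * r - 1)) *
      A (b + m - 1) := by
  obtain ⟨t, ht⟩ : ∃ t, t = (m - 1) / 2 := ⟨_, rfl⟩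
  split_ifs with h
  · have := hA.upper_half hb hbm ht (m - 1 - r) (by omega)
    rwa [show b + m - 1 - (m - 1 - r : ℕ) = b + r by omega,
      show 2 * (m - 1 - r) + 1 = 2 * m - 2 * r - 1 by omega] at this
  · have := hA.lower_half hm hb hbm ht (t - r) (by omega)
    rw [show b + t - (t - r : ℕ) = b + r by omega,
      show m - 2 * t - 1 + 2 * (t - r) = m - 2 * r - 1 by omega] at this
    rw [this]
    ring

lemma top_eq_div (hA : GenSeriesRec m A) (hm : 2 ≤ m) (hb : 0 ≤ b) (hbm : (m : ℤ) ∣ b) :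
    A (b + m - 1) = A (b - 1) / (aFn m * aFn (m + 1)) := by
  have := hA.lower_half hm hb hbm rfl ((m - 1) / 2 + 1) le_rfl
  rw [show b + ((m - 1) / 2 : ℕ) - ((m - 1) / 2 + 1 : ℕ) = b - 1 by omega,
    show m - 2 * ((m - 1) / 2) - 1 + 2 * ((m - 1) / 2 + 1) = m + 1 by omega] at this
  rw [eq_div_iff (mul_ne_zero (aFn_ne_zero _) (aFn_ne_zero _)), this]
  ring

end GenSeriesRec

/-- Closed form of the generating series `A_n^{1→m}(x)` of numerical multiplicities of level-`m`
Demazure flags in level-1 Demazure modules.  `A : ℤ → ℚ(x)` is characterized by `A₋₁ = 1`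
together with the recurrence of Proposition `genserrec` (writing `n+1 = m n₁ + n₀`,
`0 < n₀ ≤ m`, so that `n₀ = n % m + 1`).  Then for `s ≥ 0` and `0 ≤ r ≤ m-1`:
`A_{ms+r} = a_{2m-2r-1}/(a_m a_{m+1})^{s+1}` if `⌊m/2⌋ ≤ r ≤ m-1`, and
`A_{ms+r} = a_m a_{m-2r-1}/(a_m a_{m+1})^{s+1}` if `0 ≤ r ≤ ⌊m/2⌋ - 1`. -/
theorem genSeries_one_to_m_closed_form (m : ℕ) (hm : 2 ≤ m) (A : ℤ → RatFunc ℚ)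
    (hinit : A (-1) = 1)
    (hrec : ∀ n : ℤ, -1 ≤ n →
      A n =
        if 2 * (n % (m : ℤ) + 1) = (m : ℤ) - 1 then A (n + 1)
        else if (n % (m : ℤ) + 1) = (m : ℤ) - 1 ∨ 2 * (n % (m : ℤ) + 1) = (m : ℤ) - 2 then
          A (n + 1) * (1 - (if m = 2 then 0 else 1) * RatFunc.X)
        else if 2 * (n % (m : ℤ) + 1) = (m : ℤ) then
          A (n + 1) - (if m = 2 then 0 else 1) * RatFunc.X ^ 2 * A (n + 2)
        else
          (1 - RatFunc.X) * A (n + 1) - (if m = 2 then 0 else 1) * RatFunc.X ^ 2 * A (n + 2)) :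
    ∀ s r : ℕ, r ≤ m - 1 →
      A ((m : ℤ) * s + r) =
        if m / 2 ≤ r then aFn (2 * m - 2 * r - 1) / (aFn m * aFn (m + 1)) ^ (s + 1)
        else aFn m * aFn (m - 2 * r - 1) / (aFn m * aFn (m + 1)) ^ (s + 1) := by
  have hA : GenSeriesRec m A := hrec
  have hb (s : ℕ) : (0 : ℤ) ≤ m * s := by positivity
  have hbm (s : ℕ) : (m : ℤ) ∣ m * s := dvd_mul_right _ _
  have htop (s : ℕ) : A (m * s + m - 1) = ((aFn m * aFn (m + 1)) ^ (s + 1))⁻¹ := by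
    induction s with
    | zero => simpa [hinit] using hA.top_eq_div hm le_rfl (dvd_zero _)
    | succ s ih =>
      rw [hA.top_eq_div hm (hb _) (hbm _), show (m : ℤ) * (s + 1 : ℕ) - 1 = m * s + m - 1 by
        push_cast; ring, ih, pow_succ _ (s + 1), mul_inv, div_eq_mul_inv]
  intro s r hr
  rw [hA.eq_mul_top hm (hb s) (hbm s) r hr, htop]
  split_ifs <;> rw [div_eq_mul_inv]
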